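/- Fix β > 0 and for each integer m ≥ 1 let μ_{m,β} be the probability measure on ℝ^m with Lebesgue density [βΓ(m/2) / (π^{m/2} Γ(m/(2β)) 2^{m/(2β)})] exp(−(1/2)‖x‖^{2β}). Then for every ε > 0 and every m ≥ 1, μ_{m,β}({x ∈ ℝ^m : |(1/2)‖x‖^{2β} − m/(2β)| ≥ ε · m/(2β)}) ≤ 2β/(ε² m). -/

import Mathlib

/-!
If `X` has law `MGGD(0, Iₘ, β)`, the radial statistic `Y = ½‖X‖^{2β}` is `Gamma(a, 1)`-distributed
with `a = m/(2β)`, so `E (Y - a)² = a` and Chebyshev's inequality bounds the probability by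
`a / (ε a)² = 2β/(ε² m)`. In polar coordinates the second moment `E (Y - a)²` splits into three
Gamma integrals, and `(Γ(a + 2) - 2a Γ(a + 1) + a² Γ(a)) / Γ(a) = a`.
-/

open MeasureTheory Real

/-- The standardised MGGD(0, Iₘ, β) measure on ℝ^m: the measure with Lebesgue density
`[β Γ(m/2) / (π^{m/2} Γ(m/(2β)) 2^{m/(2β)})] exp(−(1/2)‖x‖^{2β})`. -/
noncomputable def mggdStd (m : ℕ) (β : ℝ) : Measure (EuclideanSpace ℝ (Fin m)) :=
  volume.withDensity fun x => ENNReal.ofReal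
    (β * Real.Gamma ((m : ℝ) / 2) /
        (Real.pi ^ ((m : ℝ) / 2) * Real.Gamma ((m : ℝ) / (2 * β)) *
          (2 : ℝ) ^ ((m : ℝ) / (2 * β))) *
      Real.exp (-(1 / 2) * ‖x‖ ^ (2 * β)))

open Set Metric

theorem lintegral_ofReal_fun_norm_addHaar {E : Type*} [NormedAddCommGroup E] [NormedSpace ℝ E]
    [MeasurableSpace E] [BorelSpace E] [FiniteDimensional ℝ E] [Nontrivial E]
    (μ : Measure E) [μ.IsAddHaarMeasure] {f : ℝ → ℝ} (hf : ∀ r, 0 ≤ r → 0 ≤ f r)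
    (hfi : IntegrableOn (fun y : ℝ => y ^ (Module.finrank ℝ E - 1) * f y) (Ioi 0)) :
    ∫⁻ x, ENNReal.ofReal (f ‖x‖) ∂μ = ENNReal.ofReal (Module.finrank ℝ E * μ.real (ball 0 1) *
      ∫ y in Ioi (0 : ℝ), y ^ (Module.finrank ℝ E - 1) * f y) := by
  rw [← ofReal_integral_eq_lintegral_ofReal ((integrable_fun_norm_addHaar μ).2 hfi)
    (ae_of_all _ fun x => hf _ (norm_nonneg x)), integral_fun_norm_addHaar]
  simp only [smul_eq_mul, nsmul_eq_mul, mul_assoc]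

theorem integral_rpow_mul_exp_neg_half_mul_rpow {p q : ℝ} (hp : 0 < p) (hq : -1 < q) :
    ∫ y in Ioi (0 : ℝ), y ^ q * exp (-(1 / 2) * y ^ p) =
      2 ^ ((q + 1) / p) / p * Gamma ((q + 1) / p) := by
  rw [integral_rpow_mul_exp_neg_mul_rpow hp hq one_half_pos, one_div, inv_rpow zero_le_two,
    ← rpow_neg zero_le_two, neg_div, neg_neg]
  ring

theorem rpow_mul_sq_sub_mul_exp_eq {y : ℝ} (hy : 0 < y) (p q a : ℝ) :
    y ^ q * ((1 / 2 * y ^ p - a) ^ 2 * exp (-(1 / 2) * y ^ p)) =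
      1 / 4 * (y ^ (q + 2 * p) * exp (-(1 / 2) * y ^ p))
        - a * (y ^ (q + p) * exp (-(1 / 2) * y ^ p))
        + a ^ 2 * (y ^ q * exp (-(1 / 2) * y ^ p)) := by
  rw [rpow_add hy, rpow_add hy, two_mul, rpow_add hy]
  ring

theorem integrableOn_rpow_mul_sq_sub_mul_exp {p q : ℝ} (hp : 0 < p) (hq : -1 < q) (a : ℝ) :
    IntegrableOn (fun y : ℝ => y ^ q * ((1 / 2 * y ^ p - a) ^ 2 * exp (-(1 / 2) * y ^ p)))
      (Ioi 0) := by
  have h₀ := integrableOn_rpow_mul_exp_neg_mul_rpow hq hp one_half_pos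
  have h₁ := integrableOn_rpow_mul_exp_neg_mul_rpow (by linarith : -1 < q + p) hp one_half_pos
  have h₂ := integrableOn_rpow_mul_exp_neg_mul_rpow (by linarith : -1 < q + 2 * p) hp one_half_pos
  exact IntegrableOn.congr_fun (((h₂.const_mul _).sub' (h₁.const_mul a)).fun_add
    (h₀.const_mul _)) (fun y hy => (rpow_mul_sq_sub_mul_exp_eq hy p q a).symm) measurableSet_Ioi

theorem integral_rpow_mul_sq_sub_mul_exp {p a : ℝ} (hp : 0 < p) (ha : 0 < a) :
    ∫ y in Ioi (0 : ℝ), y ^ (p * a - 1) * ((1 / 2 * y ^ p - a) ^ 2 * exp (-(1 / 2) * y ^ p)) =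
      2 ^ a * Gamma a * a / p := by
  have hq : -1 < p * a - 1 := by nlinarith
  have hq₁ : -1 < p * a - 1 + p := by linarith
  have hq₂ : -1 < p * a - 1 + 2 * p := by linarith
  have h₀ := integrableOn_rpow_mul_exp_neg_mul_rpow hq hp one_half_pos
  have h₁ := integrableOn_rpow_mul_exp_neg_mul_rpow hq₁ hp one_half_pos
  have h₂ := integrableOn_rpow_mul_exp_neg_mul_rpow hq₂ hp one_half_pos
  rw [setIntegral_congr_fun measurableSet_Ioi fun y hy => rpow_mul_sq_sub_mul_exp_eq hy p _ a,
    integral_add ((h₂.const_mul _).sub' (h₁.const_mul a)) (h₀.const_mul _),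
    integral_sub (h₂.const_mul _) (h₁.const_mul a), integral_const_mul, integral_const_mul,
    integral_const_mul, integral_rpow_mul_exp_neg_half_mul_rpow hp hq,
    integral_rpow_mul_exp_neg_half_mul_rpow hp hq₁, integral_rpow_mul_exp_neg_half_mul_rpow hp hq₂,
    show (p * a - 1 + 1) / p = a by field_simp; ring,
    show (p * a - 1 + p + 1) / p = a + 1 by field_simp; ring,
    show (p * a - 1 + 2 * p + 1) / p = a + 1 + 1 by field_simp; ring,
    Gamma_add_one (by positivity), Gamma_add_one ha.ne', rpow_add two_pos, rpow_add two_pos,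
    rpow_one]
  field_simp
  ring

theorem lintegral_sq_sub_mggdStd {m : ℕ} (hm : 1 ≤ m) {β : ℝ} (hβ : 0 < β) :
    ∫⁻ x, ENNReal.ofReal ((1 / 2 * ‖x‖ ^ (2 * β) - m / (2 * β)) ^ 2) ∂mggdStd m β =
      ENNReal.ofReal (m / (2 * β)) := by
  have : Nonempty (Fin m) := ⟨⟨0, hm⟩⟩
  have hm₀ : (0 : ℝ) < m := by exact_mod_cast hm
  set a : ℝ := m / (2 * β) with ha_def
  have ha : 0 < a := by positivity
  set C : ℝ := β * Gamma (m / 2) / (π ^ ((m : ℝ) / 2) * Gamma a * 2 ^ a) with hC_def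
  have hΓa := Gamma_pos_of_pos ha
  have hΓm := Gamma_pos_of_pos (by positivity : (0 : ℝ) < m / 2)
  have hC : 0 < C := by positivity
  have hpow (y : ℝ) : y ^ (m - 1) = y ^ (2 * β * a - 1) := by
    rw [← rpow_natCast, Nat.cast_sub hm, Nat.cast_one, ha_def, mul_div_cancel₀ _ (by positivity)]
  have hint := (integrableOn_rpow_mul_sq_sub_mul_exp (by positivity : 0 < 2 * β)
    (by nlinarith : -1 < 2 * β * a - 1) a).const_mul C
  calc ∫⁻ x, ENNReal.ofReal ((1 / 2 * ‖x‖ ^ (2 * β) - a) ^ 2) ∂mggdStd m β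
      = ∫⁻ x, ENNReal.ofReal (C * ((1 / 2 * ‖x‖ ^ (2 * β) - a) ^ 2 *
          exp (-(1 / 2) * ‖x‖ ^ (2 * β)))) := by
        rw [mggdStd, lintegral_withDensity_eq_lintegral_mul₀ (by fun_prop) (by fun_prop)]
        congr with x
        rw [Pi.mul_apply, ← ENNReal.ofReal_mul (by positivity), hC_def, ha_def]
        ring_nf
    _ = ENNReal.ofReal (m * volume.real (ball (0 : EuclideanSpace ℝ (Fin m)) 1) *
          (C * (2 ^ a * Gamma a * a / (2 * β)))) := by
        rw [lintegral_ofReal_fun_norm_addHaar volume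
          (f := fun r => C * ((1 / 2 * r ^ (2 * β) - a) ^ 2 * exp (-(1 / 2) * r ^ (2 * β))))
          (fun r _ => by positivity) ?_, finrank_euclideanSpace_fin]
        · simp_rw [hpow, mul_left_comm (_ ^ (_ : ℝ)) C]
          rw [integral_const_mul, integral_rpow_mul_sq_sub_mul_exp (by positivity) ha]
        · simp_rw [finrank_euclideanSpace_fin, hpow, mul_left_comm (_ ^ (_ : ℝ)) C]
          exact hint
    _ = ENNReal.ofReal a := by
        have hball : volume.real (ball (0 : EuclideanSpace ℝ (Fin m)) 1) =
            π ^ ((m : ℝ) / 2) / (m / 2 * Gamma (m / 2)) := by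
          rw [measureReal_def, EuclideanSpace.volume_ball, Fintype.card_fin, ENNReal.ofReal_one,
            one_pow, one_mul, ENNReal.toReal_ofReal (by positivity), Gamma_add_one (by positivity),
            rpow_div_two_eq_sqrt _ pi_pos.le, rpow_natCast]
        rw [hball, hC_def]
        congr 1
        field_simp

/-- for every `β > 0`, `ε > 0` and `m ≥ 1`,
`μ_{m,β}({x : |(1/2)‖x‖^{2β} − m/(2β)| ≥ ε m/(2β)}) ≤ 2β/(ε² m)`. -/
theorem mggd_radial_chebyshev
    (β : ℝ) (hβ : 0 < β) (ε : ℝ) (hε : 0 < ε) (m : ℕ) (hm : 1 ≤ m) :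
    mggdStd m β {x : EuclideanSpace ℝ (Fin m) |
        ε * ((m : ℝ) / (2 * β)) ≤ |(1 / 2) * ‖x‖ ^ (2 * β) - (m : ℝ) / (2 * β)|}
      ≤ ENNReal.ofReal (2 * β / (ε ^ 2 * m)) := by
  set a : ℝ := m / (2 * β) with ha_def
  have hm₀ : (0 : ℝ) < m := by exact_mod_cast hm
  have hεa : 0 < (ε * a) ^ 2 := by positivity
  calc mggdStd m β {x | ε * a ≤ |1 / 2 * ‖x‖ ^ (2 * β) - a|}
      ≤ mggdStd m β {x | ENNReal.ofReal ((ε * a) ^ 2) ≤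
          ENNReal.ofReal ((1 / 2 * ‖x‖ ^ (2 * β) - a) ^ 2)} := by
        refine measure_mono fun x hx => ENNReal.ofReal_le_ofReal ?_
        simpa only [sq_abs] using pow_le_pow_left₀ (by positivity) hx.out 2
    _ ≤ (∫⁻ x, ENNReal.ofReal ((1 / 2 * ‖x‖ ^ (2 * β) - a) ^ 2) ∂mggdStd m β) /
          ENNReal.ofReal ((ε * a) ^ 2) :=
        meas_ge_le_lintegral_div (by fun_prop) (by positivity) ENNReal.ofReal_ne_top
    _ = ENNReal.ofReal (2 * β / (ε ^ 2 * m)) := by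
        rw [lintegral_sq_sub_mggdStd hm hβ, ← ENNReal.ofReal_div_of_pos hεa, ha_def]
        congr 1
        field_simp
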